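/- arXiv:1012.2490 — 2 statements merged into one kernel-verified Lean document; each statement's English description precedes it below -/
import Mathlib

section
/- (Criterion 1, sufficiency.) Let n ≥ 3, κ ≠ 0, and m₁,…,m_n > 0. Let r, ω be twice-differentiable functions on a nonempty open interval I with r(t) > 0 (and κ r(t)² < 1 when κ > 0) such that for every t ∈ I the equalities δ₁(t) = … = δ_n(t) and γ₁(t) = … = γ_n(t) hold, and such that r and ω satisfy on I the scalar equations r̈ = r(1−κr²)ω̇² − κ r ṙ²/(1−κr²) − Δ₁ and r ω̈ + 2 ṙ ω̇ = Γ₁. Then the associated polygonal homographic candidate q₁,…,q_n satisfies the equations of motion of the curved n-body problem at every t ∈ I. -/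
open Real Finset

noncomputable section

/-- The sign `σ` of the curvature: `1` for `κ > 0`, `-1` for `κ < 0`. -/
def sgn' (κ : ℝ) : ℝ := if 0 < κ then 1 else -1

/-- The `σ`-dependent inner product `⊙` on `ℝ³`. -/
def odot (σ : ℝ) (a b : ℝ × ℝ × ℝ) : ℝ :=
  a.1 * b.1 + a.2.1 * b.2.1 + σ * (a.2.2 * b.2.2)

/-- The `σ`-dependent cross product `⊗` on `ℝ³`. -/
def otimes (σ : ℝ) (a b : ℝ × ℝ × ℝ) : ℝ × ℝ × ℝ :=
  (a.2.1 * b.2.2 - a.2.2 * b.2.1,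
   a.2.2 * b.1 - a.1 * b.2.2,
   σ * (a.1 * b.2.1 - a.2.1 * b.1))

/-- The equations of motion of the curved `n`-body problem, at time `t`. -/
def curvedEOM (κ : ℝ) {n : ℕ} (m : Fin n → ℝ) (q : Fin n → ℝ → ℝ × ℝ × ℝ) (t : ℝ) : Prop :=
  ∀ i, deriv (deriv (q i)) t =
    (∑ j ∈ univ.erase i,
      (m j * |κ| ^ ((3:ℝ)/2) /
        (sgn' κ - sgn' κ * (κ * odot (sgn' κ) (q i t) (q j t)) ^ 2) ^ ((3:ℝ)/2)) •
        (q j t - (κ * odot (sgn' κ) (q i t) (q j t)) • q i t))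
    - (κ * odot (sgn' κ) (deriv (q i) t) (deriv (q i) t)) • q i t

/-- The polygonal homographic candidate with vertex angles `α`, size function `r`
and angular function `ω`. -/
def polyQ (κ : ℝ) {n : ℕ} (α : Fin n → ℝ) (r ω : ℝ → ℝ) (i : Fin n) (t : ℝ) : ℝ × ℝ × ℝ :=
  (r t * Real.cos (ω t + α i), r t * Real.sin (ω t + α i),
    Real.sqrt (sgn' κ * κ⁻¹ - sgn' κ * (r t) ^ 2))

/-- `c_{ji} = 1 - cos (α_j - α_i)`. -/
def cc {n : ℕ} (α : Fin n → ℝ) (j i : Fin n) : ℝ := 1 - Real.cos (α j - α i)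

/-- `s_{ji} = sin (α_j - α_i)`. -/
def ss {n : ℕ} (α : Fin n → ℝ) (j i : Fin n) : ℝ := Real.sin (α j - α i)

/-- `μ_{ji} = 1 / (c_{ji}^{1/2} (2 - c_{ji} κ r²)^{3/2})`. -/
def muF (κ : ℝ) {n : ℕ} (α : Fin n → ℝ) (r : ℝ → ℝ) (j i : Fin n) (t : ℝ) : ℝ :=
  1 / ((cc α j i) ^ ((1:ℝ)/2) * (2 - cc α j i * κ * (r t) ^ 2) ^ ((3:ℝ)/2))

/-- `ν_{ji} = s_{ji} / (c_{ji}^{3/2} (2 - c_{ji} κ r²)^{3/2})`. -/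
def nuF (κ : ℝ) {n : ℕ} (α : Fin n → ℝ) (r : ℝ → ℝ) (j i : Fin n) (t : ℝ) : ℝ :=
  ss α j i / ((cc α j i) ^ ((3:ℝ)/2) * (2 - cc α j i * κ * (r t) ^ 2) ^ ((3:ℝ)/2))

/-- `δ_i = ∑_{j ≠ i} m_j μ_{ji}`. -/
def deltaF (κ : ℝ) {n : ℕ} (m α : Fin n → ℝ) (r : ℝ → ℝ) (i : Fin n) (t : ℝ) : ℝ :=
  ∑ j ∈ univ.erase i, m j * muF κ α r j i t

/-- `γ_i = ∑_{j ≠ i} m_j ν_{ji}`. -/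
def gammaF (κ : ℝ) {n : ℕ} (m α : Fin n → ℝ) (r : ℝ → ℝ) (i : Fin n) (t : ℝ) : ℝ :=
  ∑ j ∈ univ.erase i, m j * nuF κ α r j i t

/-- `Δ_i = (1 - κ r²) δ_i / r²`. -/
def DeltaF (κ : ℝ) {n : ℕ} (m α : Fin n → ℝ) (r : ℝ → ℝ) (i : Fin n) (t : ℝ) : ℝ :=
  (1 - κ * (r t) ^ 2) * deltaF κ m α r i t / (r t) ^ 2

/-- `Γ_i = γ_i / r²`. -/
def GammaF (κ : ℝ) {n : ℕ} (m α : Fin n → ℝ) (r : ℝ → ℝ) (i : Fin n) (t : ℝ) : ℝ :=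
  gammaF κ m α r i t / (r t) ^ 2


lemma sgn'_sq (κ : ℝ) : sgn' κ * sgn' κ = 1 := by unfold sgn'; split <;> norm_num

lemma sgn'_mul_abs {κ : ℝ} (hκ : κ ≠ 0) : sgn' κ * κ = |κ| := by
  unfold sgn'
  rcases lt_trichotomy κ 0 with h|h|h
  · rw [if_neg (by linarith), abs_of_neg h]; ring
  · exact absurd h hκ
  · rw [if_pos h, abs_of_pos h]; ring

lemma cc_pos {n : ℕ} (α : Fin n → ℝ) (hmono : StrictMono α) (hα0 : ∀ i, 0 ≤ α i)
    (hα2π : ∀ i, α i < 2 * π) {j i : Fin n} (hji : j ≠ i) : 0 < cc α j i := by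
  have hne : α j - α i ≠ 0 := sub_ne_zero.2 fun h => hji (hmono.injective h)
  have hπ := Real.pi_pos
  have habs : |α j - α i| < 2 * π :=
    abs_lt.2 ⟨by linarith [hα0 j, hα2π i], by linarith [hα0 i, hα2π j]⟩
  have hcos : Real.cos (α j - α i) < 1 := by
    rcases lt_or_eq_of_le (Real.cos_le_one (α j - α i)) with h|h
    · exact h
    · exfalso
      obtain ⟨k, hk⟩ := (Real.cos_eq_one_iff _).1 h
      have hk0 : k ≠ 0 := by rintro rfl; simp at hk; exact hne hk.symm
      have h1 : (1:ℝ) ≤ |(k:ℝ)| := by exact_mod_cast Int.one_le_abs hk0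
      rw [← hk, abs_mul] at habs
      have h2 : |(2*π : ℝ)| = 2*π := abs_of_pos (by linarith)
      rw [h2] at habs
      nlinarith
  unfold cc; linarith

set_option maxHeartbeats 2000000

/-- **Criterion 1, sufficiency.** If `δ₁ = ⋯ = δ_n` and `γ₁ = ⋯ = γ_n` on a nonempty
open interval, and `r`, `ω` satisfy the scalar equations
`r̈ = r(1-κr²)ω̇² - κ r ṙ²/(1-κr²) - Δ₁` and `r ω̈ + 2 ṙ ω̇ = Γ₁` there, then the
associated polygonal homographic candidate satisfies the equations of motion of the
curved `n`-body problem on that interval. -/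
theorem criterion_sufficiency
    (n : ℕ) (hn : 3 ≤ n) (κ : ℝ) (hκ : κ ≠ 0)
    (m : Fin n → ℝ) (hm : ∀ i, 0 < m i)
    (α : Fin n → ℝ) (hmono : StrictMono α) (hα0 : ∀ i, 0 ≤ α i) (hα2π : ∀ i, α i < 2 * π)
    (r ω : ℝ → ℝ) (a b : ℝ) (hab : a < b)
    (hr : ∀ t ∈ Set.Ioo a b, 0 < r t)
    (hreq : ∀ t ∈ Set.Ioo a b, 0 < κ → κ * (r t) ^ 2 < 1)
    (hdr : ∀ t ∈ Set.Ioo a b, DifferentiableAt ℝ r t ∧ DifferentiableAt ℝ (deriv r) t)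
    (hdω : ∀ t ∈ Set.Ioo a b, DifferentiableAt ℝ ω t ∧ DifferentiableAt ℝ (deriv ω) t)
    (hδ : ∀ t ∈ Set.Ioo a b, ∀ i j : Fin n, deltaF κ m α r i t = deltaF κ m α r j t)
    (hγ : ∀ t ∈ Set.Ioo a b, ∀ i j : Fin n, gammaF κ m α r i t = gammaF κ m α r j t)
    (hrEq : ∀ t ∈ Set.Ioo a b,
      deriv (deriv r) t =
        r t * (1 - κ * (r t) ^ 2) * (deriv ω t) ^ 2
          - κ * r t * (deriv r t) ^ 2 / (1 - κ * (r t) ^ 2)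
          - DeltaF κ m α r ⟨0, by omega⟩ t)
    (hωEq : ∀ t ∈ Set.Ioo a b,
      r t * deriv (deriv ω) t + 2 * deriv r t * deriv ω t = GammaF κ m α r ⟨0, by omega⟩ t) :
    ∀ t ∈ Set.Ioo a b, curvedEOM κ m (polyQ κ α r ω) t := by
  intro t ht i
  have hta := ht.1
  have htb := ht.2
  have hσ2 : sgn' κ * sgn' κ = 1 := sgn'_sq κ
  have hσκ : sgn' κ * κ = |κ| := sgn'_mul_abs hκ
  set σ : ℝ := sgn' κ with hσdef
  set u : ℝ → ℝ := fun s => σ * κ⁻¹ - σ * (r s) ^ 2 with hudef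
  have hκinv : κ * κ⁻¹ = 1 := mul_inv_cancel₀ hκ
  have h1κr : ∀ s ∈ Set.Ioo a b, 0 < 1 - κ * (r s) ^ 2 := by
    intro s hs
    rcases lt_or_ge 0 κ with h|h
    · linarith [hreq s hs h]
    · nlinarith [sq_nonneg (r s)]
  have hup : ∀ s ∈ Set.Ioo a b, 0 < u s := by
    intro s hs
    rcases lt_or_ge 0 κ with h|h
    · have hσ1 : σ = 1 := by rw [hσdef]; unfold sgn'; rw [if_pos h]
      show 0 < σ * κ⁻¹ - σ * (r s) ^ 2
      rw [hσ1]
      nlinarith [hreq s hs h]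
    · have hσ1 : σ = -1 := by
        rw [hσdef]; unfold sgn'; rw [if_neg (not_lt.2 h)]
      have hκneg : κ⁻¹ < 0 := inv_lt_zero.2 (lt_of_le_of_ne h hκ)
      show 0 < σ * κ⁻¹ - σ * (r s) ^ 2
      rw [hσ1]
      nlinarith [hr s hs]
  have hκu : ∀ s, κ * u s = σ * (1 - κ * (r s) ^ 2) := by
    intro s
    show κ * (σ * κ⁻¹ - σ * (r s) ^ 2) = _
    linear_combination σ * hκinv
  have hqe : ∀ k : Fin n, polyQ κ α r ω k =
      fun s => (r s * Real.cos (ω s + α k), r s * Real.sin (ω s + α k), Real.sqrt (u s)) := by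
    intro k; funext s; simp only [polyQ, ← hσdef]; rfl
  -- derivative of the square-root coordinate
  have hz : ∀ s ∈ Set.Ioo a b,
      HasDerivAt (fun s => Real.sqrt (u s)) (-(σ * (r s * deriv r s)) / Real.sqrt (u s)) s := by
    intro s hs
    have hrd := (hdr s hs).1.hasDerivAt
    have hu' : HasDerivAt u (-(σ * ((2:ℕ) * r s ^ (2-1) * deriv r s))) s := by
      rw [hudef]
      exact ((hrd.pow 2).const_mul σ).const_sub (σ * κ⁻¹)
    have hsq : Real.sqrt (u s) ≠ 0 := ne_of_gt (Real.sqrt_pos.2 (hup s hs))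
    have h3 := (Real.hasDerivAt_sqrt (ne_of_gt (hup s hs))).comp s hu'
    have h4 : (fun s => Real.sqrt (u s)) = Real.sqrt ∘ u := rfl
    rw [h4]
    refine h3.congr_deriv ?_
    field_simp
    ring
  set D1 : ℝ → ℝ × ℝ × ℝ := fun s =>
    (deriv r s * Real.cos (ω s + α i) - r s * Real.sin (ω s + α i) * deriv ω s,
     deriv r s * Real.sin (ω s + α i) + r s * Real.cos (ω s + α i) * deriv ω s,
     -(σ * (r s * deriv r s)) / Real.sqrt (u s)) with hD1def
  have hD1 : ∀ s ∈ Set.Ioo a b, HasDerivAt (polyQ κ α r ω i) (D1 s) s := by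
    intro s hs
    have hrd := (hdr s hs).1.hasDerivAt
    have hωd := (hdω s hs).1.hasDerivAt
    have hφ : HasDerivAt (fun s => ω s + α i) (deriv ω s) s := hωd.add_const _
    have hcos : HasDerivAt (fun s => Real.cos (ω s + α i)) (-Real.sin (ω s + α i) * deriv ω s) s := by
      exact hφ.cos
    have hsin : HasDerivAt (fun s => Real.sin (ω s + α i)) (Real.cos (ω s + α i) * deriv ω s) s := by
      exact hφ.sin
    have h4 := (hrd.mul hcos).prodMk ((hrd.mul hsin).prodMk (hz s hs))
    rw [hqe i, hD1def]
    convert h4 using 1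
    · rfl
    simp only [Prod.mk.injEq]
    exact ⟨by ring, by ring, trivial⟩
  have hD1eq : Set.EqOn (deriv (polyQ κ α r ω i)) D1 (Set.Ioo a b) := fun s hs => (hD1 s hs).deriv
  have hmem : Set.Ioo a b ∈ nhds t := Ioo_mem_nhds hta htb
  have hderiv2 : deriv (deriv (polyQ κ α r ω i)) t = deriv D1 t :=
    Filter.EventuallyEq.deriv_eq (Filter.eventuallyEq_of_mem hmem hD1eq)
  -- second derivative of each coordinate
  have hrd : HasDerivAt r (deriv r t) t := (hdr t ht).1.hasDerivAt
  have hrd2 : HasDerivAt (deriv r) (deriv (deriv r) t) t := (hdr t ht).2.hasDerivAt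
  have hωd : HasDerivAt ω (deriv ω t) t := (hdω t ht).1.hasDerivAt
  have hωd2 : HasDerivAt (deriv ω) (deriv (deriv ω) t) t := (hdω t ht).2.hasDerivAt
  have hφ : HasDerivAt (fun s => ω s + α i) (deriv ω t) t := hωd.add_const _
  have hcos : HasDerivAt (fun s => Real.cos (ω s + α i)) (-Real.sin (ω t + α i) * deriv ω t) t := by
    exact hφ.cos
  have hsin : HasDerivAt (fun s => Real.sin (ω s + α i)) (Real.cos (ω t + α i) * deriv ω t) t := by
    exact hφ.sin
  have hZne : Real.sqrt (u t) ≠ 0 := ne_of_gt (Real.sqrt_pos.2 (hup t ht))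
  have hx2 := (hrd2.mul hcos).sub ((hrd.mul hsin).mul hωd2)
  have hy2 := (hrd2.mul hsin).add ((hrd.mul hcos).mul hωd2)
  have hnum : HasDerivAt (fun s => -(σ * (r s * deriv r s)))
      (-(σ * (deriv r t * deriv r t + r t * deriv (deriv r) t))) t :=
    ((hrd.mul hrd2).const_mul σ).neg
  have hz3 := hnum.div (hz t ht) hZne
  have hD2 := hx2.prodMk (hy2.prodMk hz3)
  have hLHS := hderiv2.trans hD2.deriv
  
  have hσ2' : σ * σ = 1 := hσ2
  have hσκ' : σ * κ = |κ| := hσκ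
  have hrt := hr t ht
  have h1κ := h1κr t ht
  have h1κ' : 1 - (r t) ^ 2 * κ ≠ 0 := by nlinarith
  have habsκ : (0:ℝ) < |κ| := abs_pos.2 hκ
  have hr23 : ((r t) ^ 2 : ℝ) ^ ((3:ℝ)/2) = (r t) ^ 3 := by
    rw [← Real.rpow_natCast (r t) 2, ← Real.rpow_mul hrt.le, ← Real.rpow_natCast (r t) 3]
    norm_num
  have hUt : Real.sqrt (u t) * Real.sqrt (u t) = u t := Real.mul_self_sqrt (hup t ht).le
  have hterm : ∀ j ∈ Finset.univ.erase i,
      (m j * |κ| ^ ((3:ℝ)/2) /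
        (σ - σ * (κ * odot σ (polyQ κ α r ω i t) (polyQ κ α r ω j t)) ^ 2) ^ ((3:ℝ)/2)) •
        (polyQ κ α r ω j t - (κ * odot σ (polyQ κ α r ω i t) (polyQ κ α r ω j t)) • polyQ κ α r ω i t)
      = (-((1 - κ * (r t)^2) * Real.cos (ω t + α i) / (r t)^2) * (m j * muF κ α r j i t)
           + -(Real.sin (ω t + α i) / (r t)^2) * (m j * nuF κ α r j i t),
         -((1 - κ * (r t)^2) * Real.sin (ω t + α i) / (r t)^2) * (m j * muF κ α r j i t)
           + (Real.cos (ω t + α i) / (r t)^2) * (m j * nuF κ α r j i t),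
         (κ * Real.sqrt (u t) / r t) * (m j * muF κ α r j i t)) := by
    intro j hj
    have hji : j ≠ i := (Finset.mem_erase.1 hj).1
    have hc := cc_pos α hmono hα0 hα2π hji
    have h2c : 0 < 2 - cc α j i * κ * (r t) ^ 2 := by
      have hcle : cc α j i ≤ 2 := by
        have := Real.neg_one_le_cos (α j - α i); unfold cc; linarith
      rcases lt_or_ge 0 κ with h|h
      · nlinarith [hreq t ht h, sq_nonneg (r t)]
      · nlinarith [sq_nonneg (r t)]
    have hcθ : Real.cos (α j - α i) = 1 - cc α j i := by unfold cc; ring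
    have hφj : ω t + α j = (ω t + α i) + (α j - α i) := by ring
    have hodot : κ * odot σ (polyQ κ α r ω i t) (polyQ κ α r ω j t)
        = 1 - cc α j i * κ * (r t) ^ 2 := by
      simp only [hqe, odot]
      have hcs : Real.cos (α j - α i)
          = Real.cos (ω t + α j) * Real.cos (ω t + α i)
            + Real.sin (ω t + α j) * Real.sin (ω t + α i) := by
        rw [show α j - α i = (ω t + α j) - (ω t + α i) by ring, Real.cos_sub]
      linear_combination (-(κ * (r t)^2)) * hcs + (κ * (r t)^2) * hcθ + σ * hκu t
        + (1 - κ * (r t)^2) * hσ2' + (κ * σ) * hUt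
    have hden : (σ - σ * (1 - cc α j i * κ * (r t)^2) ^ 2)
        = |κ| * (cc α j i * ((r t)^2 * (2 - cc α j i * κ * (r t)^2))) := by
      linear_combination (cc α j i * (r t)^2 * (2 - cc α j i * κ * (r t)^2)) * hσκ'
    have hrpow : (|κ| * (cc α j i * ((r t)^2 * (2 - cc α j i * κ * (r t)^2)))) ^ ((3:ℝ)/2)
        = |κ| ^ ((3:ℝ)/2) * ((cc α j i) ^ ((3:ℝ)/2)
            * ((r t)^3 * (2 - cc α j i * κ * (r t)^2) ^ ((3:ℝ)/2))) := by
      rw [Real.mul_rpow habsκ.le (by positivity), Real.mul_rpow hc.le (by positivity),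
          Real.mul_rpow (by positivity) h2c.le, hr23]
    have hc32 : (cc α j i) ^ ((3:ℝ)/2) = (cc α j i) ^ ((1:ℝ)/2) * cc α j i := by
      have h := Real.rpow_add hc ((1:ℝ)/2) 1
      rw [Real.rpow_one] at h
      norm_num at h
      linarith [h]
    have hTpos : (0:ℝ) < (2 - cc α j i * κ * (r t)^2) ^ ((3:ℝ)/2) := Real.rpow_pos_of_pos h2c _
    have hcr : (0:ℝ) < (cc α j i) ^ ((1:ℝ)/2) := Real.rpow_pos_of_pos hc _
    have habs32 : (0:ℝ) < |κ| ^ ((3:ℝ)/2) := Real.rpow_pos_of_pos habsκ _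
    have hcj : Real.cos (ω t + α j)
        = Real.cos (ω t + α i) * Real.cos (α j - α i)
          - Real.sin (ω t + α i) * Real.sin (α j - α i) := by
      rw [hφj, Real.cos_add]
    have hsj : Real.sin (ω t + α j)
        = Real.sin (ω t + α i) * Real.cos (α j - α i)
          + Real.cos (ω t + α i) * Real.sin (α j - α i) := by
      rw [hφj, Real.sin_add]
    rw [hodot, hden, hrpow]
    simp only [hqe]
    simp only [Prod.smul_mk, Prod.mk_sub_mk, smul_eq_mul, Prod.mk.injEq, muF, nuF, ss]
    rw [hc32, hcj, hsj, hcθ]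
    refine ⟨?_, ?_, ?_⟩
    · field_simp
      ring
    · field_simp
      ring
    · field_simp
      ring
  
  have hδ0 : deltaF κ m α r i t = deltaF κ m α r ⟨0, by omega⟩ t := hδ t ht i _
  have hγ0 : gammaF κ m α r i t = gammaF κ m α r ⟨0, by omega⟩ t := hγ t ht i _
  have hrE := hrEq t ht
  have hωE := hωEq t ht
  rw [DeltaF, ← hδ0] at hrE
  rw [GammaF, ← hγ0] at hωE
  have hrE2 : deriv (deriv r) t * ((1 - κ * (r t)^2) * (r t)^2)
      = r t * (1 - κ * (r t)^2)^2 * (deriv ω t)^2 * (r t)^2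
        - κ * r t * (deriv r t)^2 * (r t)^2
        - (1 - κ * (r t)^2)^2 * deltaF κ m α r i t := by
    rw [hrE]; field_simp
  have hωE2 : (r t * deriv (deriv ω) t + 2 * deriv r t * deriv ω t) * (r t)^2
      = gammaF κ m α r i t := by
    rw [hωE]; field_simp
  have e3 : σ * (-(σ * (r t * deriv r t)) / Real.sqrt (u t)
        * (-(σ * (r t * deriv r t)) / Real.sqrt (u t)))
      = κ * ((r t)^2 * (deriv r t)^2) / (1 - κ * (r t)^2) := by
    rw [div_mul_div_comm, hUt, mul_div_assoc', div_eq_div_iff (ne_of_gt (hup t ht)) (ne_of_gt h1κ)]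
    linear_combination (σ * (r t)^2 * (deriv r t)^2 * (1 - κ * (r t)^2)) * hσ2'
      - (r t)^2 * (deriv r t)^2 * hκu t
  have hK : κ * odot σ (D1 t) (D1 t)
      = κ * (deriv r t)^2 / (1 - κ * (r t)^2) + κ * (r t)^2 * (deriv ω t)^2 := by
    simp only [hD1def, odot]
    rw [e3]
    have hpyth := Real.sin_sq_add_cos_sq (ω t + α i)
    field_simp
    linear_combination (((deriv r t)^2 + (r t)^2 * (deriv ω t)^2) * (1 - κ * (r t)^2)) * hpyth
  rw [hLHS, Finset.sum_congr rfl hterm,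
    show deriv (polyQ κ α r ω i) t = D1 t from (hD1 t ht).deriv, hK]
  simp only [hqe]
  have hdelta : ∑ j ∈ Finset.univ.erase i, m j * muF κ α r j i t = deltaF κ m α r i t := rfl
  have hgamma : ∑ j ∈ Finset.univ.erase i, m j * nuF κ α r j i t = gammaF κ m α r i t := rfl
  have hUpos := hup t ht
  refine Prod.ext ?_ (Prod.ext ?_ ?_)
  · simp only [Prod.fst_sub, Prod.smul_mk, smul_eq_mul, Prod.fst_sum, Pi.mul_apply]
    rw [Finset.sum_add_distrib, ← Finset.mul_sum, ← Finset.mul_sum, hdelta, hgamma]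
    field_simp
    linear_combination (Real.cos (ω t + α i)) * hrE2
      - (Real.sin (ω t + α i) * (1 - κ * (r t)^2)) * hωE2
  · simp only [Prod.snd_sub, Prod.fst_sub, Prod.smul_mk, smul_eq_mul, Prod.snd_sum, Prod.fst_sum, Pi.mul_apply]
    rw [Finset.sum_add_distrib, ← Finset.mul_sum, ← Finset.mul_sum, hdelta, hgamma]
    field_simp
    linear_combination (Real.sin (ω t + α i)) * hrE2
      + (Real.cos (ω t + α i) * (1 - κ * (r t)^2)) * hωE2
  · simp only [Prod.snd_sub, Prod.smul_mk, smul_eq_mul, Prod.snd_sum]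
    rw [← Finset.mul_sum, hdelta]
    field_simp
    linear_combination
      (-(σ * r t * ((deriv r t)^2 + r t * deriv (deriv r) t) * (1 - κ * (r t)^2))
        - κ * (deltaF κ m α r i t * (1 - κ * (r t)^2)
          - r t * ((deriv r t)^2 + (r t)^2 * (1 - κ * (r t)^2) * (deriv ω t)^2))
          * (Real.sqrt (u t) * Real.sqrt (u t) + u t)) * hUt
      + (σ * (r t)^3 * (deriv r t)^2
        - u t * (deltaF κ m α r i t * (1 - κ * (r t)^2)
          - r t * ((deriv r t)^2 + (r t)^2 * (1 - κ * (r t)^2) * (deriv ω t)^2))) * hκu t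
      - σ * u t * hrE2
end
end

section
/- (Conservation of energy.) Let n ≥ 2, κ ≠ 0, σ = sign(κ), and m₁,…,m_n > 0. Suppose q_i : ℝ → ℝ³, i = 1,…,n, are twice-differentiable curves with κ(q_i⊙q_i) = 1 for all t, no two of which are at a singular configuration (κ q_i⊙q_j ≠ ±1 for i ≠ j), satisfying the equations of motion of the curved n-body problem on an open interval I. Then the function t ↦ (1/2)∑_{i=1}^n m_i (q̇_i(t)⊙q̇_i(t)) − ∑_{1≤i<j≤n} m_i m_j |κ|^{1/2} (κ q_i(t)⊙q_j(t)) / [σ − σ(κ q_i(t)⊙q_j(t))²]^{1/2} is constant on I (kinetic energy minus force function). -/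
open Real Finset

noncomputable section

/-! ### Auxiliary lemmas for the proof of energy conservation -/

lemma energyAux_hda_fst {E F : Type*} [NormedAddCommGroup E] [NormedSpace ℝ E]
    [NormedAddCommGroup F] [NormedSpace ℝ F]
    {f : ℝ → E × F} {f' : E × F} {t : ℝ} (h : HasDerivAt f f' t) :
    HasDerivAt (fun s => (f s).1) f'.1 t := by
  simpa using h.hasFDerivAt.fst.hasDerivAt

lemma energyAux_hda_snd {E F : Type*} [NormedAddCommGroup E] [NormedSpace ℝ E]
    [NormedAddCommGroup F] [NormedSpace ℝ F]
    {f : ℝ → E × F} {f' : E × F} {t : ℝ} (h : HasDerivAt f f' t) :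
    HasDerivAt (fun s => (f s).2) f'.2 t := by
  simpa using h.hasFDerivAt.snd.hasDerivAt

lemma odot_comm' (σ : ℝ) (a b : ℝ × ℝ × ℝ) : odot σ a b = odot σ b a := by
  unfold odot; ring

lemma odot_add_left' (σ : ℝ) (a b c : ℝ × ℝ × ℝ) :
    odot σ (a + b) c = odot σ a c + odot σ b c := by
  simp only [odot, Prod.fst_add, Prod.snd_add]; ring

lemma odot_sub_left' (σ : ℝ) (a b c : ℝ × ℝ × ℝ) :
    odot σ (a - b) c = odot σ a c - odot σ b c := by
  simp only [odot, Prod.fst_sub, Prod.snd_sub]; ring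

lemma odot_smul_left' (σ r : ℝ) (a c : ℝ × ℝ × ℝ) :
    odot σ (r • a) c = r * odot σ a c := by
  simp only [odot, Prod.smul_fst, Prod.smul_snd, smul_eq_mul]; ring

lemma odot_sum_left' {ι : Type*} (σ : ℝ) (s : Finset ι) (v : ι → ℝ × ℝ × ℝ) (c : ℝ × ℝ × ℝ) :
    odot σ (∑ i ∈ s, v i) c = ∑ i ∈ s, odot σ (v i) c := by
  induction s using Finset.cons_induction with
  | empty => simp [odot]
  | cons i s hi ih => rw [Finset.sum_cons, Finset.sum_cons, odot_add_left', ih]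

lemma hasDerivAt_odot' {σ : ℝ} {f g : ℝ → ℝ × ℝ × ℝ} {f' g' : ℝ × ℝ × ℝ} {t : ℝ}
    (hf : HasDerivAt f f' t) (hg : HasDerivAt g g' t) :
    HasDerivAt (fun s => odot σ (f s) (g s)) (odot σ f' (g t) + odot σ (f t) g') t := by
  have h1 := (energyAux_hda_fst hf).mul (energyAux_hda_fst hg)
  have h2 := (energyAux_hda_fst (energyAux_hda_snd hf)).mul
    (energyAux_hda_fst (energyAux_hda_snd hg))
  have h3 := ((energyAux_hda_snd (energyAux_hda_snd hf)).mul
    (energyAux_hda_snd (energyAux_hda_snd hg))).const_mul σ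
  have h4 := (h1.add h2).add h3
  convert h4 using 1
  · rfl
  · rfl
  · rfl
  simp only [odot]; ring

lemma energyAux_neg_rpow_half {d : ℝ} (hd : d < 0) : d ^ ((1:ℝ)/2) = 0 := by
  rw [Real.rpow_def_of_neg hd, show (1:ℝ)/2 * π = π/2 by ring, Real.cos_pi_div_two, mul_zero]

lemma energyAux_neg_rpow_threehalf {d : ℝ} (hd : d < 0) : d ^ ((3:ℝ)/2) = 0 := by
  rw [Real.rpow_def_of_neg hd, show (3:ℝ)/2 * π = π/2 + π by ring, Real.cos_add_pi,
    Real.cos_pi_div_two, neg_zero, mul_zero]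

lemma energyAux_pair_deriv (σ C : ℝ) (hσ : σ = 1 ∨ σ = -1) {x : ℝ → ℝ} {x' t : ℝ}
    (hx : HasDerivAt x x' t) (h1 : x t ≠ 1) (h2 : x t ≠ -1) :
    HasDerivAt (fun s => C * x s / (σ - σ * x s ^ 2) ^ ((1:ℝ)/2))
      (C * σ * x' / (σ - σ * x t ^ 2) ^ ((3:ℝ)/2)) t := by
  set d : ℝ := σ - σ * x t ^ 2 with hdd
  have hσ2 : σ ^ 2 = 1 := by rcases hσ with h | h <;> simp [h]
  have hd0 : d ≠ 0 := by
    intro hc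
    have hx2 : x t * x t = 1 := by
      rcases hσ with h | h <;> (rw [hdd, h] at hc; nlinarith)
    rcases mul_self_eq_one_iff.mp hx2 with h | h
    exacts [h1 h, h2 h]
  have hD : HasDerivAt (fun s => σ - σ * x s ^ 2) (-(σ * (2 * x t * x'))) t := by
    simpa using ((hx.pow 2).const_mul σ).const_sub σ
  rcases lt_or_gt_of_ne hd0 with hneg | hpos
  · have hcont : ContinuousAt (fun s => σ - σ * x s ^ 2) t := hD.continuousAt
    have hev : ∀ᶠ s in nhds t, (σ - σ * x s ^ 2) < 0 :=
      hcont.eventually (eventually_lt_nhds hneg)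
    have hev0 : (fun s => C * x s / (σ - σ * x s ^ 2) ^ ((1:ℝ)/2)) =ᶠ[nhds t] fun _ => 0 := by
      filter_upwards [hev] with s hs
      rw [energyAux_neg_rpow_half hs, div_zero]
    have h0 : C * σ * x' / d ^ ((3:ℝ)/2) = 0 := by
      rw [energyAux_neg_rpow_threehalf hneg, div_zero]
    rw [h0]
    exact (hasDerivAt_const t 0).congr_of_eventuallyEq hev0
  · have hgpos : (0:ℝ) < d := hpos
    have hg : HasDerivAt (fun s => (σ - σ * x s ^ 2) ^ ((1:ℝ)/2))
        (-(σ * (2 * x t * x')) * ((1:ℝ)/2) * d ^ ((1:ℝ)/2 - 1)) t :=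
      hD.rpow_const (Or.inl hd0)
    have hnum : HasDerivAt (fun s => C * x s) (C * x') t := hx.const_mul C
    have hgne : d ^ ((1:ℝ)/2) ≠ 0 := (Real.rpow_pos_of_pos hgpos _).ne'
    have hmain := hnum.div hg hgne
    convert hmain using 1
    · rfl
    · rfl
    · rfl
    rw [← hdd]
    set u : ℝ := d ^ ((1:ℝ)/2) with hu
    have hv : d ^ ((1:ℝ)/2 - 1) = u / d := by
      rw [Real.rpow_sub hgpos, Real.rpow_one]
    have e2 : d ^ ((1:ℝ)/2 - 1) * d = u := by
      rw [hv]; field_simp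
    have e3 : d ^ ((3:ℝ)/2) = u * d := by
      rw [hu, ← Real.rpow_add_one hd0]; norm_num
    rw [e3]
    have hσd : d + σ * x t ^ 2 = σ := by rw [hdd]; ring
    rw [div_eq_div_iff (by positivity) (by positivity)]
    linear_combination (-(C * x' * u^2)) * hσd - (C * σ * (x t)^2 * x' * u) * e2

lemma energyAux_sum_erase_pairs {n : ℕ} (f : Fin n → Fin n → ℝ) :
    ∑ i, ∑ j ∈ univ.erase i, f i j
      = ∑ i, ∑ j ∈ univ.filter (fun j => i < j), (f i j + f j i) := by
  have hsplit : ∀ i : Fin n, univ.erase i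
      = univ.filter (fun j => i < j) ∪ univ.filter (fun j => j < i) := by
    intro i; ext j
    simp only [mem_erase, mem_union, mem_filter, mem_univ, true_and, and_true]
    constructor
    · intro h; exact lt_or_gt_of_ne (Ne.symm h)
    · rintro (h | h)
      exacts [ne_of_gt h, ne_of_lt h]
  have hdisj : ∀ i : Fin n,
      Disjoint (univ.filter (fun j => i < j)) (univ.filter (fun j => j < i)) := by
    intro i; rw [Finset.disjoint_left]
    intro j hj hj'
    simp only [mem_filter] at hj hj'
    exact lt_asymm hj.2 hj'.2
  have hswap : ∑ i, ∑ j ∈ univ.filter (fun j => j < i), f i j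
      = ∑ j, ∑ i ∈ univ.filter (fun i => j < i), f i j := by
    apply Finset.sum_comm'
    intro i j
    simp [and_comm]
  calc ∑ i, ∑ j ∈ univ.erase i, f i j
      = ∑ i, ((∑ j ∈ univ.filter (fun j => i < j), f i j)
          + ∑ j ∈ univ.filter (fun j => j < i), f i j) := by
        refine Finset.sum_congr rfl fun i _ => ?_
        rw [hsplit i, Finset.sum_union (hdisj i)]
    _ = (∑ i, ∑ j ∈ univ.filter (fun j => i < j), f i j)
          + ∑ i, ∑ j ∈ univ.filter (fun j => j < i), f i j := Finset.sum_add_distrib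
    _ = (∑ i, ∑ j ∈ univ.filter (fun j => i < j), f i j)
          + ∑ i, ∑ j ∈ univ.filter (fun j => i < j), f j i := by rw [hswap]
    _ = ∑ i, ∑ j ∈ univ.filter (fun j => i < j), (f i j + f j i) := by
        rw [← Finset.sum_add_distrib]
        refine Finset.sum_congr rfl fun i _ => ?_
        rw [← Finset.sum_add_distrib]
/-- **Conservation of energy.** Along any solution of the curved `n`-body problem on
an open interval (twice differentiable, confined to the surface, avoiding singular
configurations), the total energy — kinetic energy minus the force function,
`(1/2)∑ m_i (q̇_i ⊙ q̇_i) - ∑_{i<j} m_i m_j |κ|^{1/2} (κ q_i⊙q_j)/(σ - σ(κ q_i⊙q_j)²)^{1/2}`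
— is constant. -/
theorem energy_conserved
    (n : ℕ) (hn : 2 ≤ n) (κ : ℝ) (hκ : κ ≠ 0)
    (m : Fin n → ℝ) (hm : ∀ i, 0 < m i)
    (q : Fin n → ℝ → ℝ × ℝ × ℝ)
    (hdiff : ∀ (i : Fin n) (t : ℝ),
      DifferentiableAt ℝ (q i) t ∧ DifferentiableAt ℝ (deriv (q i)) t)
    (hconstr : ∀ (i : Fin n) (t : ℝ), κ * odot (sgn' κ) (q i t) (q i t) = 1)
    (a b : ℝ) (hab : a < b)
    (hnonsing : ∀ t ∈ Set.Ioo a b, ∀ i j : Fin n, i ≠ j →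
      κ * odot (sgn' κ) (q i t) (q j t) ≠ 1 ∧ κ * odot (sgn' κ) (q i t) (q j t) ≠ -1)
    (heom : ∀ t ∈ Set.Ioo a b, curvedEOM κ m q t) :
    ∀ t₁ ∈ Set.Ioo a b, ∀ t₂ ∈ Set.Ioo a b,
      ((1:ℝ)/2 * ∑ i : Fin n, m i * odot (sgn' κ) (deriv (q i) t₁) (deriv (q i) t₁))
        - (∑ i : Fin n, ∑ j ∈ univ.filter (fun j => i < j),
            m i * m j * |κ| ^ ((1:ℝ)/2) * (κ * odot (sgn' κ) (q i t₁) (q j t₁)) /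
              (sgn' κ - sgn' κ * (κ * odot (sgn' κ) (q i t₁) (q j t₁)) ^ 2) ^ ((1:ℝ)/2)) =
      ((1:ℝ)/2 * ∑ i : Fin n, m i * odot (sgn' κ) (deriv (q i) t₂) (deriv (q i) t₂))
        - (∑ i : Fin n, ∑ j ∈ univ.filter (fun j => i < j),
            m i * m j * |κ| ^ ((1:ℝ)/2) * (κ * odot (sgn' κ) (q i t₂) (q j t₂)) /
              (sgn' κ - sgn' κ * (κ * odot (sgn' κ) (q i t₂) (q j t₂)) ^ 2) ^ ((1:ℝ)/2)) := by
  set σ : ℝ := sgn' κ with hσdef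
  have hσ : σ = 1 ∨ σ = -1 := by
    rw [hσdef]; unfold sgn'; split
    · left; rfl
    · right; rfl
  have habs : |κ| = σ * κ := by
    rw [hσdef]; unfold sgn'
    rcases lt_or_gt_of_ne hκ with h | h
    · rw [if_neg (by linarith), abs_of_neg h]; ring
    · rw [if_pos h, abs_of_pos h]; ring
  have habspos : (0:ℝ) < |κ| := abs_pos.mpr hκ
  have habs32 : |κ| ^ ((3:ℝ)/2) = |κ| ^ ((1:ℝ)/2) * (σ * κ) := by
    rw [← habs, show (3:ℝ)/2 = 1/2 + 1 by norm_num, Real.rpow_add_one habspos.ne']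
  have hq : ∀ (i : Fin n) (t : ℝ), HasDerivAt (q i) (deriv (q i) t) t :=
    fun i t => ((hdiff i t).1).hasDerivAt
  have hq' : ∀ (i : Fin n) (t : ℝ), HasDerivAt (deriv (q i)) (deriv (deriv (q i)) t) t :=
    fun i t => ((hdiff i t).2).hasDerivAt
  have horth : ∀ (i : Fin n) (t : ℝ), odot σ (q i t) (deriv (q i) t) = 0 := by
    intro i t
    have h1 : HasDerivAt (fun s => κ * odot σ (q i s) (q i s))
        (κ * (odot σ (deriv (q i) t) (q i t) + odot σ (q i t) (deriv (q i) t))) t :=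
      (hasDerivAt_odot' (hq i t) (hq i t)).const_mul κ
    have h2 : (fun s => κ * odot σ (q i s) (q i s)) = fun _ => (1:ℝ) :=
      funext fun s => hconstr i s
    rw [h2] at h1
    have h3 := h1.unique (hasDerivAt_const t 1)
    rw [odot_comm' σ (deriv (q i) t) (q i t)] at h3
    rcases mul_eq_zero.mp h3 with h | h
    · exact absurd h hκ
    · linarith
  set E : ℝ → ℝ := fun s =>
    ((1:ℝ)/2 * ∑ i : Fin n, m i * odot σ (deriv (q i) s) (deriv (q i) s))
      - (∑ i : Fin n, ∑ j ∈ univ.filter (fun j => i < j),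
          m i * m j * |κ| ^ ((1:ℝ)/2) * (κ * odot σ (q i s) (q j s)) /
            (σ - σ * (κ * odot σ (q i s) (q j s)) ^ 2) ^ ((1:ℝ)/2)) with hEdef
  have hE : ∀ t ∈ Set.Ioo a b, HasDerivAt E (0:ℝ) t := by
    intro t ht
    have hT : HasDerivAt
        (fun s => (1:ℝ)/2 * ∑ i : Fin n, m i * odot σ (deriv (q i) s) (deriv (q i) s))
        ((1:ℝ)/2 * ∑ i : Fin n, m i * (odot σ (deriv (deriv (q i)) t) (deriv (q i) t)
          + odot σ (deriv (q i) t) (deriv (deriv (q i)) t))) t := by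
      exact (HasDerivAt.fun_sum fun i _ =>
        (hasDerivAt_odot' (hq' i t) (hq' i t)).const_mul (m i)).const_mul ((1:ℝ)/2)
    have hU : HasDerivAt
        (fun s => ∑ i : Fin n, ∑ j ∈ univ.filter (fun j => i < j),
          m i * m j * |κ| ^ ((1:ℝ)/2) * (κ * odot σ (q i s) (q j s)) /
            (σ - σ * (κ * odot σ (q i s) (q j s)) ^ 2) ^ ((1:ℝ)/2))
        (∑ i : Fin n, ∑ j ∈ univ.filter (fun j => i < j),
          m i * m j * |κ| ^ ((1:ℝ)/2) * σ *
            (κ * (odot σ (deriv (q i) t) (q j t) + odot σ (q i t) (deriv (q j) t))) /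
            (σ - σ * (κ * odot σ (q i t) (q j t)) ^ 2) ^ ((3:ℝ)/2)) t := by
      refine HasDerivAt.fun_sum fun i _ => HasDerivAt.fun_sum fun j hj => ?_
      have hij : i ≠ j := (Finset.mem_filter.mp hj).2.ne
      have hx : HasDerivAt (fun s => κ * odot σ (q i s) (q j s))
          (κ * (odot σ (deriv (q i) t) (q j t) + odot σ (q i t) (deriv (q j) t))) t :=
        (hasDerivAt_odot' (hq i t) (hq j t)).const_mul κ
      exact energyAux_pair_deriv σ (m i * m j * |κ| ^ ((1:ℝ)/2)) hσ hx
        ((hnonsing t ht i j hij).1) ((hnonsing t ht i j hij).2)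
    have key : ((1:ℝ)/2 * ∑ i : Fin n, m i * (odot σ (deriv (deriv (q i)) t) (deriv (q i) t)
          + odot σ (deriv (q i) t) (deriv (deriv (q i)) t)))
        = ∑ i : Fin n, ∑ j ∈ univ.filter (fun j => i < j),
          m i * m j * |κ| ^ ((1:ℝ)/2) * σ *
            (κ * (odot σ (deriv (q i) t) (q j t) + odot σ (q i t) (deriv (q j) t))) /
            (σ - σ * (κ * odot σ (q i t) (q j t)) ^ 2) ^ ((3:ℝ)/2) := by
      calc ((1:ℝ)/2 * ∑ i : Fin n, m i * (odot σ (deriv (deriv (q i)) t) (deriv (q i) t)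
              + odot σ (deriv (q i) t) (deriv (deriv (q i)) t)))
          = ∑ i : Fin n, m i * odot σ (deriv (deriv (q i)) t) (deriv (q i) t) := by
            rw [Finset.mul_sum]
            refine Finset.sum_congr rfl fun i _ => ?_
            rw [odot_comm' σ (deriv (q i) t) (deriv (deriv (q i)) t)]
            ring
        _ = ∑ i : Fin n, ∑ j ∈ univ.erase i,
              m i * (m j * |κ| ^ ((3:ℝ)/2) /
                (σ - σ * (κ * odot σ (q i t) (q j t)) ^ 2) ^ ((3:ℝ)/2)
                * odot σ (q j t) (deriv (q i) t)) := by
            refine Finset.sum_congr rfl fun i _ => ?_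
            rw [heom t ht i, ← hσdef, odot_sub_left', odot_smul_left',
              odot_sum_left', horth i t, mul_zero, sub_zero, Finset.mul_sum]
            refine Finset.sum_congr rfl fun j _ => ?_
            rw [odot_smul_left', odot_sub_left', odot_smul_left', horth i t,
              mul_zero, sub_zero]
        _ = ∑ i : Fin n, ∑ j ∈ univ.filter (fun j => i < j),
              ((m i * (m j * |κ| ^ ((3:ℝ)/2) /
                (σ - σ * (κ * odot σ (q i t) (q j t)) ^ 2) ^ ((3:ℝ)/2)
                * odot σ (q j t) (deriv (q i) t)))
              + (m j * (m i * |κ| ^ ((3:ℝ)/2) /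
                (σ - σ * (κ * odot σ (q j t) (q i t)) ^ 2) ^ ((3:ℝ)/2)
                * odot σ (q i t) (deriv (q j) t)))) :=
            energyAux_sum_erase_pairs _
        _ = ∑ i : Fin n, ∑ j ∈ univ.filter (fun j => i < j),
              m i * m j * |κ| ^ ((1:ℝ)/2) * σ *
                (κ * (odot σ (deriv (q i) t) (q j t) + odot σ (q i t) (deriv (q j) t))) /
                (σ - σ * (κ * odot σ (q i t) (q j t)) ^ 2) ^ ((3:ℝ)/2) := by
            refine Finset.sum_congr rfl fun i _ => Finset.sum_congr rfl fun j _ => ?_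
            rw [odot_comm' σ (q j t) (q i t),
              odot_comm' σ (deriv (q i) t) (q j t), habs32]
            ring
    have h0 := hT.sub hU
    rw [key, sub_self] at h0
    exact h0
  intro t₁ ht₁ t₂ ht₂
  have main : ∀ u v : ℝ, u ∈ Set.Ioo a b → v ∈ Set.Ioo a b → u ≤ v → E u = E v := by
    intro u v hu hv huv
    have hsub : Set.Icc u v ⊆ Set.Ioo a b := fun x hx =>
      ⟨lt_of_lt_of_le hu.1 hx.1, lt_of_le_of_lt hx.2 hv.2⟩
    have hc := constant_of_has_deriv_right_zero (f := E) (a := u) (b := v)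
      (fun x hx => (hE x (hsub hx)).continuousAt.continuousWithinAt)
      (fun x hx => (hE x (hsub (Set.Ico_subset_Icc_self hx))).hasDerivWithinAt)
    exact (hc v (Set.right_mem_Icc.mpr huv)).symm
  show E t₁ = E t₂
  rcases le_total t₁ t₂ with h | h
  · exact main t₁ t₂ ht₁ ht₂ h
  · exact (main t₂ t₁ ht₂ ht₁ h).symm
end
end
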